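/- arXiv:1404.1193 — 10 statements merged into one kernel-verified Lean document; each statement's English description precedes it below -/
import Mathlib

section
/- The greedy policy x_i* = min{c_i, (∑_{j=1}^{i} T_j) − ∑_{j=1}^{i−1} x_j*} for i = 1,…,N is an optimal solution to the linear program: minimize α∑_{i=1}^N c_i − (α−β)∑_{i=1}^N x_i subject to 0 ≤ x_i ≤ c_i for all i and ∑_{i=1}^k x_i ≤ ∑_{i=1}^k T_i for all k ∈ {1,…,N}. -/
/-!
Write `X k`, `S k` for the partial sums of the greedy policy and of the budgets `T` over the
first `k` indices. The greedy rule says exactly `X (k+1) = min (X k + c k) (S (k+1))`, so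
`X ≤ S` at once, and by induction `X k` dominates the partial sums of every feasible point:
those satisfy both `∑ x ≤ (previous sum) + c k` and `∑ x ≤ S (k+1)`. Since `α - β ≥ 0`, the
objective decreases in `∑ x`, so the greedy policy is optimal.
-/

open Finset

section Greedy

variable {c T xs : ℕ → ℝ}
  (hxs : ∀ i, xs i = min (c i) ((∑ j ∈ range (i+1), T j) - ∑ j ∈ range i, xs j))
include hxs

theorem greedy_sum_range_succ (k : ℕ) :
    ∑ i ∈ range (k+1), xs i = min (∑ i ∈ range k, xs i + c k) (∑ i ∈ range (k+1), T i) := by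
  rw [sum_range_succ xs, hxs k, ← min_add_add_left, add_comm, add_sub_cancel]

theorem greedy_sum_range_le (k : ℕ) : ∑ i ∈ range k, xs i ≤ ∑ i ∈ range k, T i := by
  cases k with
  | zero => simp
  | succ k => exact (greedy_sum_range_succ hxs k).trans_le (min_le_right _ _)

theorem greedy_le_cap (i : ℕ) : xs i ≤ c i :=
  (hxs i).trans_le (min_le_left _ _)

theorem greedy_nonneg (hc : ∀ i, 0 ≤ c i) (hT : ∀ i, 0 ≤ T i) (i : ℕ) : 0 ≤ xs i := by
  rw [hxs i, sum_range_succ]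
  refine le_min (hc i) ?_
  linarith [greedy_sum_range_le hxs i, hT i]

theorem sum_range_le_greedy_sum_range {N : ℕ} {x : ℕ → ℝ} (hx : ∀ i < N, x i ≤ c i)
    (hcum : ∀ k ≤ N, ∑ i ∈ range k, x i ≤ ∑ i ∈ range k, T i) :
    ∀ k ≤ N, ∑ i ∈ range k, x i ≤ ∑ i ∈ range k, xs i := by
  intro k
  induction k with
  | zero => simp
  | succ k ih =>
    intro hk
    rw [greedy_sum_range_succ hxs k]
    refine le_min ?_ (hcum (k+1) hk)
    rw [sum_range_succ]
    exact add_le_add (ih (k.le_succ.trans hk)) (hx k hk)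

end Greedy

theorem greedy_optimal_LP_general (N : ℕ) (α β : ℝ) (hαβ : β ≤ α)
    (c T : ℕ → ℝ) (hc : ∀ i, 0 ≤ c i) (hT : ∀ i, 0 ≤ T i)
    (xs : ℕ → ℝ)
    (hxs : ∀ i, xs i = min (c i)
      ((∑ j ∈ Finset.range (i+1), T j) - ∑ j ∈ Finset.range i, xs j)) :
    (∀ i < N, 0 ≤ xs i ∧ xs i ≤ c i) ∧
    (∀ k ≤ N, ∑ i ∈ Finset.range k, xs i ≤ ∑ i ∈ Finset.range k, T i) ∧
    (∀ x : ℕ → ℝ, (∀ i < N, 0 ≤ x i ∧ x i ≤ c i) →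
      (∀ k ≤ N, ∑ i ∈ Finset.range k, x i ≤ ∑ i ∈ Finset.range k, T i) →
      α * ∑ i ∈ Finset.range N, c i - (α - β) * ∑ i ∈ Finset.range N, xs i ≤
        α * ∑ i ∈ Finset.range N, c i - (α - β) * ∑ i ∈ Finset.range N, x i) := by
  refine ⟨fun i _ => ⟨greedy_nonneg hxs hc hT i, greedy_le_cap hxs i⟩,
    fun k _ => greedy_sum_range_le hxs k, fun x hx hcum => ?_⟩
  have hdom := sum_range_le_greedy_sum_range hxs (fun i hi => (hx i hi).2) hcum N le_rfl
  exact sub_le_sub_left (mul_le_mul_of_nonneg_left hdom (sub_nonneg.2 hαβ)) _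

/-- The greedy policy is an optimal solution of the cumulative-constraint linear program. -/
theorem greedy_optimal_LP (N : ℕ) (hN : 0 < N) (α β : ℝ) (hαβ : β ≤ α)
    (c T : ℕ → ℝ) (hc : ∀ i, 0 ≤ c i) (hT : ∀ i, 0 ≤ T i)
    (xs : ℕ → ℝ)
    (hxs : ∀ i, xs i = min (c i)
      ((∑ j ∈ Finset.range (i+1), T j) - ∑ j ∈ Finset.range i, xs j)) :
    (∀ i < N, 0 ≤ xs i ∧ xs i ≤ c i) ∧
    (∀ k ≤ N, ∑ i ∈ Finset.range k, xs i ≤ ∑ i ∈ Finset.range k, T i) ∧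
    (∀ x : ℕ → ℝ, (∀ i < N, 0 ≤ x i ∧ x i ≤ c i) →
      (∀ k ≤ N, ∑ i ∈ Finset.range k, x i ≤ ∑ i ∈ Finset.range k, T i) →
      α * ∑ i ∈ Finset.range N, c i - (α - β) * ∑ i ∈ Finset.range N, xs i ≤
        α * ∑ i ∈ Finset.range N, c i - (α - β) * ∑ i ∈ Finset.range N, x i) :=
  greedy_optimal_LP_general N α β hαβ c T hc hT xs hxs
end

section
/- Among all feasible points of the cumulative-constraint linear program, the greedy policy maximizes every partial sum: for every k ∈ {1,…,N} and every feasible x, ∑_{i=1}^k x_i ≤ ∑_{i=1}^k x_i*. -/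
open Finset

/-- The greedy step takes `min (c k) (slack)`, so the new greedy partial sum is the minimum of the
two bounds that constrain any feasible partial sum: the old one plus `c k`, and the cumulative budget. -/
theorem sum_range_le_sum_range_greedy {α : Type*} [AddCommGroup α] [LinearOrder α]
    [IsOrderedAddMonoid α] (c T xs x : ℕ → α)
    (hxs : ∀ i, xs i = min (c i) ((∑ j ∈ range (i + 1), T j) - ∑ j ∈ range i, xs j))
    (k : ℕ) (hle : ∀ i < k, x i ≤ c i)
    (hcum : ∀ j ≤ k, ∑ i ∈ range j, x i ≤ ∑ i ∈ range j, T i) :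
    ∑ i ∈ range k, x i ≤ ∑ i ∈ range k, xs i := by
  induction k with
  | zero => simp
  | succ k ih =>
    have ih' := ih (fun i hi => hle i (by omega)) (fun j hj => hcum j (by omega))
    calc ∑ i ∈ range (k + 1), x i
        ≤ min ((∑ i ∈ range k, xs i) + c k) (∑ i ∈ range (k + 1), T i) :=
          le_min (by rw [sum_range_succ]; exact add_le_add ih' (hle k k.lt_succ_self))
            (hcum (k + 1) le_rfl)
      _ = ∑ i ∈ range (k + 1), xs i := by
          rw [sum_range_succ xs k, hxs k, ← min_add_add_left, add_sub_cancel]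

theorem greedy_maximizes_partial_sums_general (N : ℕ)
    (c T : ℕ → ℝ)
    (xs : ℕ → ℝ)
    (hxs : ∀ i, xs i = min (c i)
      ((∑ j ∈ Finset.range (i+1), T j) - ∑ j ∈ Finset.range i, xs j))
    (x : ℕ → ℝ) (hfeas : ∀ i < N, 0 ≤ x i ∧ x i ≤ c i)
    (hcum : ∀ k ≤ N, ∑ i ∈ Finset.range k, x i ≤ ∑ i ∈ Finset.range k, T i) :
    ∀ k ≤ N, ∑ i ∈ Finset.range k, x i ≤ ∑ i ∈ Finset.range k, xs i := fun k hk =>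
  sum_range_le_sum_range_greedy c T xs x hxs k (fun i hi => (hfeas i (by omega)).2)
    (fun j hj => hcum j (by omega))

/-- Among all feasible points, the greedy policy maximizes every partial sum. -/
theorem greedy_maximizes_partial_sums (N : ℕ) (hN : 0 < N)
    (c T : ℕ → ℝ) (hc : ∀ i, 0 ≤ c i) (hT : ∀ i, 0 ≤ T i)
    (xs : ℕ → ℝ)
    (hxs : ∀ i, xs i = min (c i)
      ((∑ j ∈ Finset.range (i+1), T j) - ∑ j ∈ Finset.range i, xs j))
    (x : ℕ → ℝ) (hfeas : ∀ i < N, 0 ≤ x i ∧ x i ≤ c i)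
    (hcum : ∀ k ≤ N, ∑ i ∈ Finset.range k, x i ≤ ∑ i ∈ Finset.range k, T i) :
    ∀ k ≤ N, ∑ i ∈ Finset.range k, x i ≤ ∑ i ∈ Finset.range k, xs i :=
  greedy_maximizes_partial_sums_general N c T xs hxs x hfeas hcum
end

section
/- At any optimal solution of the energy cost minimization problem with outage constraint, the number of outage slots equals ⌊Nε⌋, i.e., the outage constraint is used to its full extent, provided ⌊Nε⌋ ≥ 1, all channel inversion powers are strictly positive, and α, β > 0. -/
/-!
If fewer than `⌊Nε⌋` slots are in outage, some slot `j` is served. Switching slot `j` off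
(`p_j^c = p_j^r = 0`) only loosens the harvesting constraints and adds at most one outage slot, so
the new policy is still feasible; but it saves `α p_j^c + β p_j^r`, which is positive because
`p_j^c + p_j^r ≥ p_j^inv > 0`. This contradicts optimality.
-/

open scoped Classical

open Finset Function

theorem Nat.floor_natCast_mul_le {N : ℕ} {ε : ℝ} (hε : ε ≤ 1) : ⌊(N : ℝ) * ε⌋₊ ≤ N := by
  simpa using Nat.floor_le_floor (mul_le_of_le_one_right N.cast_nonneg hε)

theorem Finset.exists_mem_not_of_card_filter_lt {ι : Type*} {s : Finset ι} {p : ι → Prop}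
    [DecidablePred p] (h : #(s.filter p) < #s) : ∃ i ∈ s, ¬ p i := by
  by_contra! hp
  exact h.ne (card_filter_eq_iff.2 hp)

theorem Finset.card_filter_le_card_filter_add_one {ι : Type*} [DecidableEq ι] {s : Finset ι}
    {p q : ι → Prop} [DecidablePred p] [DecidablePred q] {j : ι}
    (h : ∀ i ∈ s, i ≠ j → q i → p i) : #(s.filter q) ≤ #(s.filter p) + 1 :=
  calc #(s.filter q) ≤ #(insert j (s.filter p)) := card_le_card fun i hi => by
        obtain ⟨his, hqi⟩ := mem_filter.1 hi
        by_cases hij : i = j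
        · exact mem_insert.2 (.inl hij)
        · exact mem_insert_of_mem (mem_filter.2 ⟨his, h i his hij hqi⟩)
    _ ≤ #(s.filter p) + 1 := card_insert_le _ _

theorem Finset.sum_mul_add_mul_update_zero_add {ι R : Type*} [DecidableEq ι]
    [NonUnitalNonAssocSemiring R] {s : Finset ι} {j : ι} (hj : j ∈ s) (α β : R) (f g : ι → R) :
    ∑ i ∈ s, (α * update f j 0 i + β * update g j 0 i) + (α * f j + β * g j) =
      ∑ i ∈ s, (α * f i + β * g i) := by
  have : (fun i => α * update f j 0 i + β * update g j 0 i) =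
      update (fun i => α * f i + β * g i) j 0 := by
    ext i; by_cases hij : i = j <;> simp [hij]
  rw [this, sum_update_of_mem hj, sdiff_singleton_eq_erase, zero_add, sum_erase_add _ _ hj]

theorem update_zero_nonneg {ι M : Type*} [DecidableEq ι] [Zero M] [Preorder M] {f : ι → M}
    (hf : ∀ i, 0 ≤ f i) (j : ι) :
    ∀ i, 0 ≤ update f j 0 i := fun i => by
  by_cases hij : i = j <;> simp [hij, hf]

theorem mul_add_mul_pos_of_lt {α β a b : ℝ} (hβ : 0 < β) (hαβ : β < α) (ha : 0 ≤ a)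
    (hab : 0 < a + b) : 0 < α * a + β * b := by
  nlinarith

theorem optimal_uses_full_outage_budget_general (N : ℕ) (ε : ℝ)
    (hε1 : ε ≤ 1)
    (α β : ℝ) (hβ : 0 < β) (hαβ : β < α)
    (pinv T : ℕ → ℝ) (hpinv : ∀ i < N, 0 < pinv i)
    (pc pr : ℕ → ℝ)
    (hpc : ∀ i, 0 ≤ pc i) (hpr : ∀ i, 0 ≤ pr i)
    (hcum : ∀ k ≤ N, ∑ i ∈ Finset.range k, pr i ≤ ∑ i ∈ Finset.range k, T i)
    (hout : ((Finset.range N).filter (fun i => pc i + pr i < pinv i)).card ≤ ⌊(N : ℝ) * ε⌋₊)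
    (hopt : ∀ qc qr : ℕ → ℝ, (∀ i, 0 ≤ qc i) → (∀ i, 0 ≤ qr i) →
      (∀ k ≤ N, ∑ i ∈ Finset.range k, qr i ≤ ∑ i ∈ Finset.range k, T i) →
      ((Finset.range N).filter (fun i => qc i + qr i < pinv i)).card ≤ ⌊(N : ℝ) * ε⌋₊ →
      ∑ i ∈ Finset.range N, (α * pc i + β * pr i) ≤
        ∑ i ∈ Finset.range N, (α * qc i + β * qr i)) :
    ((Finset.range N).filter (fun i => pc i + pr i < pinv i)).card = ⌊(N : ℝ) * ε⌋₊ := by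
  refine hout.antisymm (not_lt.1 fun hlt => ?_)
  obtain ⟨j, hjN, hj⟩ := exists_mem_not_of_card_filter_lt <|
    hlt.trans_le ((Nat.floor_natCast_mul_le hε1).trans_eq (card_range N).symm)
  have hcheaper := hopt (update pc j 0) (update pr j 0) (update_zero_nonneg hpc j)
    (update_zero_nonneg hpr j)
    (fun k hk => (sum_le_sum fun i _ => update_le_self_iff.2 (hpr j) i).trans (hcum k hk))
    (by
      refine (card_filter_le_card_filter_add_one (j := j) fun i _ hij => ?_).trans hlt
      simp [hij])
  have hsaving := mul_add_mul_pos_of_lt hβ hαβ (hpc j)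
    ((hpinv j (mem_range.1 hjN)).trans_le (not_lt.1 hj))
  linarith [sum_mul_add_mul_update_zero_add hjN α β pc pr]

/-- At any optimal solution, the number of outage slots equals ⌊Nε⌋. -/
theorem optimal_uses_full_outage_budget (N : ℕ) (hN : 0 < N) (ε : ℝ)
    (hε0 : 0 ≤ ε) (hε1 : ε ≤ 1)
    (α β : ℝ) (hβ : 0 < β) (hαβ : β < α)
    (pinv T : ℕ → ℝ) (hpinv : ∀ i < N, 0 < pinv i) (hT : ∀ i, 0 ≤ T i)
    (hbudget : 1 ≤ ⌊(N : ℝ) * ε⌋₊)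
    (pc pr : ℕ → ℝ)
    (hpc : ∀ i, 0 ≤ pc i) (hpr : ∀ i, 0 ≤ pr i)
    (hcum : ∀ k ≤ N, ∑ i ∈ Finset.range k, pr i ≤ ∑ i ∈ Finset.range k, T i)
    (hout : ((Finset.range N).filter (fun i => pc i + pr i < pinv i)).card ≤ ⌊(N : ℝ) * ε⌋₊)
    (hopt : ∀ qc qr : ℕ → ℝ, (∀ i, 0 ≤ qc i) → (∀ i, 0 ≤ qr i) →
      (∀ k ≤ N, ∑ i ∈ Finset.range k, qr i ≤ ∑ i ∈ Finset.range k, T i) →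
      ((Finset.range N).filter (fun i => qc i + qr i < pinv i)).card ≤ ⌊(N : ℝ) * ε⌋₊ →
      ∑ i ∈ Finset.range N, (α * pc i + β * pr i) ≤
        ∑ i ∈ Finset.range N, (α * qc i + β * qr i)) :
    ((Finset.range N).filter (fun i => pc i + pr i < pinv i)).card = ⌊(N : ℝ) * ε⌋₊ :=
  optimal_uses_full_outage_budget_general N ε hε1 α β hβ hαβ pinv T hpinv pc pr hpc hpr hcum hout
    hopt
end

section
/- For a fixed set S of outage slots, the greedy power allocation — setting p_i^c = p_i^r = 0 for i ∈ S, and for i ∉ S setting p_i^r = min{p_i^inv, ∑_{j=1}^i T_j − ∑_{j=1}^{i−1} p_j^r} and p_i^c = p_i^inv − p_i^r — minimizes the total cost ∑_i (α p_i^c + β p_i^r) over all feasible allocations that serve every slot not in S (i.e., p_i^c + p_i^r ≥ p_i^inv for i ∉ S) and satisfy the cumulative harvesting constraints. -/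
/-!
Write `d i` for the demand of slot `i` (zero on the outage set). Paying `α` for conventional and
`β ≤ α` for renewable power, a slot that draws `r` units of renewable power towards its demand costs
at least `α * d i - (α - β) * r`, so minimizing cost means maximizing the renewable power spent on
demand. The greedy rule spends as much renewable power as it can in every slot, hence its
cumulative renewable usage dominates that of every feasible allocation capped at the demands:
in each slot it either meets the demand with renewable power or exhausts all energy harvested
so far.
-/

open Finset

open scoped Classical

/-- The paper's greedy `p_i^r`, for demands `d i` (the `p_i^inv`, zeroed on the outage set). -/
def IsGreedySchedule (d T p : ℕ → ℝ) : Prop :=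
  ∀ i, p i = min (d i) ((∑ j ∈ range (i + 1), T j) - ∑ j ∈ range i, p j)

section IsGreedySchedule

variable {d T p : ℕ → ℝ}

theorem IsGreedySchedule.eq_or_sum_range_eq (hp : IsGreedySchedule d T p) (n : ℕ) :
    p n = d n ∨ ∑ j ∈ range (n + 1), p j = ∑ j ∈ range (n + 1), T j := by
  rcases min_choice (d n) ((∑ j ∈ range (n + 1), T j) - ∑ j ∈ range n, p j) with h | h
  · left
    rw [hp n, h]
  · right
    rw [sum_range_succ, hp n, h]
    ring

theorem IsGreedySchedule.sum_range_le (hp : IsGreedySchedule d T p) {r : ℕ → ℝ}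
    (hrd : ∀ i, r i ≤ d i) {k : ℕ}
    (hrT : ∀ j ≤ k, ∑ i ∈ range j, r i ≤ ∑ i ∈ range j, T i) :
    ∑ i ∈ range k, r i ≤ ∑ i ∈ range k, p i := by
  induction k with
  | zero => simp
  | succ n ih =>
    rcases hp.eq_or_sum_range_eq n with h | h
    · rw [sum_range_succ, sum_range_succ, h]
      exact add_le_add (ih fun j hj => hrT j (by omega)) (hrd n)
    · rw [h]
      exact hrT (n + 1) le_rfl

end IsGreedySchedule

theorem slot_cost_lower_bound {α β d c r : ℝ} (hβ : 0 ≤ β) (hαβ : β ≤ α) (hc : 0 ≤ c)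
    (hd : d ≤ c + r) :
    α * d - (α - β) * min r d ≤ α * c + β * r := by
  rcases le_total r d with h | h
  · rw [min_eq_left h]
    nlinarith
  · rw [min_eq_right h]
    nlinarith

theorem greedy_allocation_optimal_fixed_outage_set_general (N : ℕ)
    (α β : ℝ) (hβ : 0 ≤ β) (hαβ : β < α)
    (pinv T : ℕ → ℝ)
    (S : Finset ℕ)
    (pr : ℕ → ℝ)
    (hpr : ∀ i, pr i = min (if i ∈ S then 0 else pinv i)
      ((∑ j ∈ Finset.range (i+1), T j) - ∑ j ∈ Finset.range i, pr j))
    (pc : ℕ → ℝ)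
    (hpc : ∀ i, pc i = (if i ∈ S then 0 else pinv i) - pr i) :
    ∀ qc qr : ℕ → ℝ, (∀ i, 0 ≤ qc i) → (∀ i, 0 ≤ qr i) →
      (∀ k ≤ N, ∑ i ∈ Finset.range k, qr i ≤ ∑ i ∈ Finset.range k, T i) →
      (∀ i < N, i ∉ S → pinv i ≤ qc i + qr i) →
      ∑ i ∈ Finset.range N, (α * pc i + β * pr i) ≤
        ∑ i ∈ Finset.range N, (α * qc i + β * qr i) := by
  intro qc qr hqc hqr hcum hserve
  set d : ℕ → ℝ := fun i => if i ∈ S then 0 else pinv i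
  have hdemand : ∀ i < N, d i ≤ qc i + qr i := fun i hi => by
    by_cases hiS : i ∈ S
    · simpa [d, hiS] using add_nonneg (hqc i) (hqr i)
    · simpa [d, hiS] using hserve i hi hiS
  have hrenewable : ∑ i ∈ range N, min (qr i) (d i) ≤ ∑ i ∈ range N, pr i :=
    IsGreedySchedule.sum_range_le hpr (fun i => min_le_right _ _) fun j hj =>
      (sum_le_sum fun i _ => min_le_left _ _).trans (hcum j hj)
  calc ∑ i ∈ range N, (α * pc i + β * pr i)
        = α * ∑ i ∈ range N, d i - (α - β) * ∑ i ∈ range N, pr i := by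
          rw [mul_sum, mul_sum, ← sum_sub_distrib]
          exact sum_congr rfl fun i _ => by rw [hpc i]; ring
    _ ≤ α * ∑ i ∈ range N, d i - (α - β) * ∑ i ∈ range N, min (qr i) (d i) := by
          gcongr
    _ = ∑ i ∈ range N, (α * d i - (α - β) * min (qr i) (d i)) := by
          rw [mul_sum, mul_sum, sum_sub_distrib]
    _ ≤ ∑ i ∈ range N, (α * qc i + β * qr i) :=
          sum_le_sum fun i hi =>
            slot_cost_lower_bound hβ hαβ.le (hqc i) (hdemand i (mem_range.mp hi))

/-- For a fixed outage set `S`, the greedy power allocation minimizes the total cost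
among all feasible allocations serving every slot not in `S`. -/
theorem greedy_allocation_optimal_fixed_outage_set (N : ℕ) (hN : 0 < N)
    (α β : ℝ) (hβ : 0 ≤ β) (hαβ : β < α)
    (pinv T : ℕ → ℝ) (hpinv : ∀ i, 0 ≤ pinv i) (hT : ∀ i, 0 ≤ T i)
    (S : Finset ℕ) (hS : S ⊆ Finset.range N)
    (pr : ℕ → ℝ)
    (hpr : ∀ i, pr i = min (if i ∈ S then 0 else pinv i)
      ((∑ j ∈ Finset.range (i+1), T j) - ∑ j ∈ Finset.range i, pr j))
    (pc : ℕ → ℝ)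
    (hpc : ∀ i, pc i = (if i ∈ S then 0 else pinv i) - pr i) :
    ∀ qc qr : ℕ → ℝ, (∀ i, 0 ≤ qc i) → (∀ i, 0 ≤ qr i) →
      (∀ k ≤ N, ∑ i ∈ Finset.range k, qr i ≤ ∑ i ∈ Finset.range k, T i) →
      (∀ i < N, i ∉ S → pinv i ≤ qc i + qr i) →
      ∑ i ∈ Finset.range N, (α * pc i + β * pr i) ≤
        ∑ i ∈ Finset.range N, (α * qc i + β * qr i) :=
  greedy_allocation_optimal_fixed_outage_set_general N α β hβ hαβ pinv T S pr hpr pc hpc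
end

section
/- When exactly one slot must be dropped (⌊Nε⌋ = 1): if there exists a slot k < i with p_k^inv > p_i^inv, then there is an optimal solution in which slot i is not the dropped slot. Equivalently, dropping slot k instead of slot i never increases the minimal total cost. -/
/-
Let slot `i` be dropped by a feasible policy. Drop slot `k < i` instead and let slot `i`
take over, up to `pinv i`, the renewable power that slot `k` used: the renewable power moves
to a later slot, so every cumulative harvesting constraint still holds, and slot `i` now uses
no more renewable and (as `pinv i < pinv k`) no more conventional power than slot `k` did.
-/

/-- A policy drops exactly the slot `d` and serves every other slot with channel
inversion power, subject to cumulative harvesting constraints. -/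
def DropOneFeasible (N : ℕ) (pinv T : ℕ → ℝ) (d : ℕ) (pc pr : ℕ → ℝ) : Prop :=
  (∀ j, 0 ≤ pc j) ∧ (∀ j, 0 ≤ pr j) ∧
  (∀ m ≤ N, ∑ j ∈ Finset.range m, pr j ≤ ∑ j ∈ Finset.range m, T j) ∧
  (∀ j < N, j ≠ d → pc j + pr j = pinv j) ∧
  pc d = 0 ∧ pr d = 0

open Finset

theorem Finset.sum_sub_single_add_single {ι M : Type*} [DecidableEq ι] [AddCommGroup M]
    {s : Finset ι} {k i : ι} (hk : k ∈ s) (hi : i ∈ s) (f : ι → M) (a b : M) :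
    ∑ j ∈ s, (f - Pi.single k a + Pi.single i b : ι → M) j = ∑ j ∈ s, f j - a + b := by
  simp [sum_add_distrib, sum_sub_distrib, sum_pi_single', hk, hi]

theorem sum_range_sub_single_add_single_le (f : ℕ → ℝ) {k i : ℕ} (hki : k ≤ i) {a b : ℝ}
    (hb : 0 ≤ b) (hba : b ≤ a) (m : ℕ) :
    ∑ j ∈ range m, (f - Pi.single k a + Pi.single i b : ℕ → ℝ) j ≤ ∑ j ∈ range m, f j := by
  simp only [Pi.add_apply, Pi.sub_apply, sum_add_distrib, sum_sub_distrib, sum_pi_single',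
    mem_range]
  split_ifs <;> first | omega | linarith

theorem DropOneFeasible.move_drop {N : ℕ} {pinv T pc pr : ℕ → ℝ} {k i : ℕ}
    (h : DropOneFeasible N pinv T i pc pr) (hki : k < i) {c r : ℝ} (hc : 0 ≤ c) (hr : 0 ≤ r)
    (hrk : r ≤ pr k) (hcr : c + r = pinv i) :
    DropOneFeasible N pinv T k (pc - Pi.single k (pc k) + Pi.single i c : ℕ → ℝ)
      (pr - Pi.single k (pr k) + Pi.single i r : ℕ → ℝ) := by
  obtain ⟨hpc, hpr, hcum, hserve, hpci, hpri⟩ := h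
  have hik : i ≠ k := hki.ne'
  refine ⟨fun j => ?_, fun j => ?_, fun m hm => ?_, fun j hjN hjk => ?_, ?_, ?_⟩
  · rcases eq_or_ne j i with rfl | hji
    · simp [hik, hpci, hc]
    · rcases eq_or_ne j k with rfl | hjk <;> simp [*]
  · rcases eq_or_ne j i with rfl | hji
    · simp [hik, hpri, hr]
    · rcases eq_or_ne j k with rfl | hjk <;> simp [*]
  · exact (sum_range_sub_single_add_single_le pr hki.le hr hrk m).trans (hcum m hm)
  · rcases eq_or_ne j i with rfl | hji
    · simp [hjk, hpci, hpri, hcr]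
    · simp [hji, hjk, hserve j hjN hji]
  · simp [hik.symm]
  · simp [hik.symm]

theorem drop_earlier_worse_slot_general (N : ℕ) (α β : ℝ) (hβ : 0 ≤ β) (hαβ : β < α)
    (pinv T : ℕ → ℝ) (hpinv : ∀ j < N, 0 < pinv j)
    (k i : ℕ) (hki : k < i) (hiN : i < N) (hworse : pinv i < pinv k) :
    ∀ pc pr : ℕ → ℝ, DropOneFeasible N pinv T i pc pr →
      ∃ qc qr : ℕ → ℝ, DropOneFeasible N pinv T k qc qr ∧
        ∑ j ∈ Finset.range N, (α * qc j + β * qr j) ≤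
          ∑ j ∈ Finset.range N, (α * pc j + β * pr j) := by
  intro pc pr h
  have hkN : k < N := hki.trans hiN
  have hpck : pc k + pr k = pinv k := h.2.2.2.1 k hkN hki.ne
  set r := min (pr k) (pinv i)
  have hrk : r ≤ pr k := min_le_left _ _
  have hc : pinv i - r ≤ pc k := by
    rcases min_cases (pr k) (pinv i) with ⟨hr, -⟩ | ⟨hr, -⟩ <;> linarith [h.1 k]
  refine ⟨_, _, h.move_drop hki (sub_nonneg.2 (min_le_right _ _))
    (le_min (h.2.1 k) (hpinv i hiN).le) hrk (sub_add_cancel _ _), ?_⟩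
  have hk := mem_range.2 hkN
  have hi := mem_range.2 hiN
  simp only [sum_add_distrib, ← mul_sum, sum_sub_single_add_single hk hi]
  linarith [mul_le_mul_of_nonneg_left hc (hβ.trans hαβ.le), mul_le_mul_of_nonneg_left hrk hβ]

/-- If a slot `k` before slot `i` requires more channel inversion power, then dropping
slot `k` instead of slot `i` never increases the total cost. -/
theorem drop_earlier_worse_slot (N : ℕ) (α β : ℝ) (hβ : 0 ≤ β) (hαβ : β < α)
    (pinv T : ℕ → ℝ) (hpinv : ∀ j < N, 0 < pinv j) (hT : ∀ j, 0 ≤ T j)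
    (k i : ℕ) (hki : k < i) (hiN : i < N) (hworse : pinv i < pinv k) :
    ∀ pc pr : ℕ → ℝ, DropOneFeasible N pinv T i pc pr →
      ∃ qc qr : ℕ → ℝ, DropOneFeasible N pinv T k qc qr ∧
        ∑ j ∈ Finset.range N, (α * qc j + β * qr j) ≤
          ∑ j ∈ Finset.range N, (α * pc j + β * pr j) :=
  drop_earlier_worse_slot_general N α β hβ hαβ pinv T hpinv k i hki hiN hworse
end

section
/- When ⌊Nε⌋ = M slots may be dropped: if for slot i there exist M distinct slots j_1 < j_2 < … < j_M, all with j_m < i and p_{j_m}^inv > p_i^inv, then there exists an optimal solution in which slot i is kept (not dropped). -/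
/-!
If slot `i` is dropped in an optimal policy, then, since at most `M` slots are dropped and
`i` is not among the `M` slots of `J`, some `k ∈ J` is served. Drop `k` instead and serve
`i` with `min (pr k) (pinv i)` of harvested energy, the rest conventionally. Because `k < i`,
the harvested energy is only moved later in time, so every cumulative constraint still holds;
because `pinv i < pinv k`, serving `i` this way costs no more than serving `k` did.
-/

/-- A policy selects a set `S` of at most `M` dropped slots (zero power there) and serves
the remaining slots with channel inversion power, subject to cumulative harvesting
constraints. -/
def DropSetFeasible (N M : ℕ) (pinv T : ℕ → ℝ) (S : Finset ℕ) (pc pr : ℕ → ℝ) : Prop :=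
  S ⊆ Finset.range N ∧ S.card ≤ M ∧
  (∀ j, 0 ≤ pc j) ∧ (∀ j, 0 ≤ pr j) ∧
  (∀ m ≤ N, ∑ j ∈ Finset.range m, pr j ≤ ∑ j ∈ Finset.range m, T j) ∧
  (∀ j < N, j ∉ S → pc j + pr j = pinv j) ∧
  (∀ j ∈ S, pc j = 0 ∧ pr j = 0)

open Finset Function

theorem sum_update_eq_sum_add {ι M : Type*} [DecidableEq ι] [AddCommGroup M]
    (s : Finset ι) (f : ι → M) (i : ι) (b : M) :
    ∑ j ∈ s, update f i b j = ∑ j ∈ s, f j + if i ∈ s then b - f i else 0 := by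
  have hpoint : ∀ j, update f i b j = f j + if j = i then b - f i else 0 := by
    intro j
    by_cases hj : j = i
    · subst hj; simp
    · simp [hj]
  simp only [hpoint, sum_add_distrib, sum_ite_eq']

theorem sum_update_update_eq_sum_add {ι M : Type*} [DecidableEq ι] [AddCommGroup M]
    (s : Finset ι) (f : ι → M) {k i : ι} (hik : i ≠ k) (a b : M) :
    ∑ j ∈ s, update (update f k a) i b j =
      ∑ j ∈ s, f j + (if k ∈ s then a - f k else 0) + (if i ∈ s then b - f i else 0) := by
  rw [sum_update_eq_sum_add, sum_update_eq_sum_add, update_of_ne hik]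

theorem sum_range_update_update_le {f : ℕ → ℝ} {k i : ℕ} (hki : k < i) {m : ℝ}
    (hmk : m ≤ f k) (hk : 0 ≤ f k) (hi : 0 ≤ f i) (n : ℕ) :
    ∑ j ∈ range n, update (update f k 0) i m j ≤ ∑ j ∈ range n, f j := by
  rw [sum_update_update_eq_sum_add _ _ hki.ne']
  by_cases hin : i < n
  · have hkn : k < n := hki.trans hin
    simp only [mem_range, hkn, hin, if_true]
    linarith
  · simp only [mem_range, hin, if_false]
    split_ifs <;> linarith

theorem mul_sub_min_add_mul_min_le {α β c r p : ℝ} (hα : 0 ≤ α) (hβ : 0 ≤ β) (hc : 0 ≤ c)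
    (hp : p ≤ c + r) : α * (p - min r p) + β * min r p ≤ α * c + β * r := by
  rcases le_total r p with hrp | hpr
  · rw [min_eq_left hrp]
    nlinarith
  · rw [min_eq_right hpr]
    nlinarith

namespace DropSetFeasible

variable {N M : ℕ} {pinv T : ℕ → ℝ} {S : Finset ℕ} {pc pr : ℕ → ℝ} {i k : ℕ} {m : ℝ}

theorem swap (h : DropSetFeasible N M pinv T S pc pr) (hiS : i ∈ S) (hkS : k ∉ S)
    (hki : k < i) (hm : 0 ≤ m) (hmk : m ≤ pr k) (hmi : m ≤ pinv i) :
    DropSetFeasible N M pinv T (insert k (S.erase i))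
      (update (update pc k 0) i (pinv i - m)) (update (update pr k 0) i m) := by
  obtain ⟨hSN, hSM, hpc, hpr, hcum, hserve, hdrop⟩ := h
  have hiN : i < N := mem_range.mp (hSN hiS)
  have hik : i ≠ k := hki.ne'
  refine ⟨?_, ?_, ?_, ?_, ?_, ?_, ?_⟩
  · exact insert_subset (mem_range.mpr (hki.trans hiN)) ((erase_subset i S).trans hSN)
  · have := card_insert_le k (S.erase i)
    have := card_erase_of_mem hiS
    have := card_pos.mpr ⟨i, hiS⟩
    omega
  · intro j
    simp only [update_apply]
    split_ifs <;> linarith [hpc j]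
  · intro j
    simp only [update_apply]
    split_ifs <;> linarith [hpr j]
  · intro n hn
    exact (sum_range_update_update_le hki hmk (hpr k) (hpr i) n).trans (hcum n hn)
  · intro j hjN hj
    simp only [mem_insert, mem_erase, not_or, not_and] at hj
    obtain ⟨hjk, hjS⟩ := hj
    by_cases hji : j = i
    · subst hji; simp
    · simpa [hjk, hji] using hserve j hjN (hjS hji)
  · intro j hj
    rcases mem_insert.mp hj with rfl | hj
    · simp [hik.symm]
    · obtain ⟨hji, hjS⟩ := mem_erase.mp hj
      have hjk : j ≠ k := ne_of_mem_of_not_mem hjS hkS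
      simpa [hji, hjk] using hdrop j hjS

theorem swap_cost_le {α β : ℝ} (hα : 0 ≤ α) (hβ : 0 ≤ β)
    (h : DropSetFeasible N M pinv T S pc pr) (hiS : i ∈ S) (hkS : k ∉ S) (hkN : k < N)
    (hik : i ≠ k) (hpinv : pinv i ≤ pinv k) :
    ∑ j ∈ range N, (α * update (update pc k 0) i (pinv i - min (pr k) (pinv i)) j +
        β * update (update pr k 0) i (min (pr k) (pinv i)) j) ≤
      ∑ j ∈ range N, (α * pc j + β * pr j) := by
  obtain ⟨hSN, -, hpc, -, -, hserve, hdrop⟩ := h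
  have hiN : i ∈ range N := hSN hiS
  have hkN : k ∈ range N := mem_range.mpr hkN
  have hslot := mul_sub_min_add_mul_min_le hα hβ (hpc k)
    (hpinv.trans (hserve k (mem_range.mp hkN) hkS).ge)
  simp only [sum_add_distrib, ← mul_sum, sum_update_update_eq_sum_add _ _ hik, hiN, hkN,
    if_true, (hdrop i hiS).1, (hdrop i hiS).2]
  linarith

end DropSetFeasible

theorem keep_slot_with_M_worse_predecessors_general (N M : ℕ) (α β : ℝ) (hβ : 0 ≤ β) (hαβ : β < α)
    (pinv T : ℕ → ℝ) (hpinv : ∀ j < N, 0 < pinv j)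
    (i : ℕ) (hiN : i < N)
    (J : Finset ℕ) (hJcard : J.card = M) (hJ : ∀ j ∈ J, j < i ∧ pinv i < pinv j)
    (S : Finset ℕ) (pc pr : ℕ → ℝ)
    (hfeas : DropSetFeasible N M pinv T S pc pr)
    (hopt : ∀ S' qc qr, DropSetFeasible N M pinv T S' qc qr →
      ∑ j ∈ Finset.range N, (α * pc j + β * pr j) ≤
        ∑ j ∈ Finset.range N, (α * qc j + β * qr j)) :
    ∃ S' qc qr, DropSetFeasible N M pinv T S' qc qr ∧
      (∀ S'' rc rr, DropSetFeasible N M pinv T S'' rc rr →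
        ∑ j ∈ Finset.range N, (α * qc j + β * qr j) ≤
          ∑ j ∈ Finset.range N, (α * rc j + β * rr j)) ∧
      i ∉ S' := by
  by_cases hiS : i ∈ S
  case neg => exact ⟨S, pc, pr, hfeas, hopt, hiS⟩
  have ⟨_, hSM, _, hpr, _⟩ := hfeas
  have hiJ : i ∉ J := fun h => (hJ i h).1.false
  obtain ⟨k, hkJ, hkS⟩ : ∃ k ∈ J, k ∉ S := by
    obtain ⟨k, hk, hkS⟩ := exists_mem_notMem_of_card_lt_card (s := S) (t := insert i J)
      (by rw [card_insert_of_notMem hiJ]; omega)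
    exact ⟨k, (mem_insert.mp hk).resolve_left (ne_of_mem_of_not_mem hiS hkS).symm, hkS⟩
  obtain ⟨hki, hpinvk⟩ := hJ k hkJ
  refine ⟨_, _, _, hfeas.swap hiS hkS hki (le_min (hpr k) (hpinv i hiN).le)
    (min_le_left _ _) (min_le_right _ _), fun S'' rc rr h => ?_, ?_⟩
  · exact (hfeas.swap_cost_le (hβ.trans hαβ.le) hβ hiS hkS (hki.trans hiN) hki.ne'
      hpinvk.le).trans (hopt S'' rc rr h)
  · simp [hki.ne']

/-- If there are `M` slots before slot `i`, each requiring more channel inversion power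
than slot `i`, then there exists an optimal solution keeping slot `i`. -/
theorem keep_slot_with_M_worse_predecessors (N M : ℕ) (α β : ℝ) (hβ : 0 ≤ β) (hαβ : β < α)
    (pinv T : ℕ → ℝ) (hpinv : ∀ j < N, 0 < pinv j) (hT : ∀ j, 0 ≤ T j)
    (i : ℕ) (hiN : i < N)
    (J : Finset ℕ) (hJcard : J.card = M) (hJ : ∀ j ∈ J, j < i ∧ pinv i < pinv j)
    (S : Finset ℕ) (pc pr : ℕ → ℝ)
    (hfeas : DropSetFeasible N M pinv T S pc pr)
    (hopt : ∀ S' qc qr, DropSetFeasible N M pinv T S' qc qr →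
      ∑ j ∈ Finset.range N, (α * pc j + β * pr j) ≤
        ∑ j ∈ Finset.range N, (α * qc j + β * qr j)) :
    ∃ S' qc qr, DropSetFeasible N M pinv T S' qc qr ∧
      (∀ S'' rc rr, DropSetFeasible N M pinv T S'' rc rr →
        ∑ j ∈ Finset.range N, (α * qc j + β * qr j) ≤
          ∑ j ∈ Finset.range N, (α * rc j + β * rr j)) ∧
      i ∉ S' :=
  keep_slot_with_M_worse_predecessors_general N M α β hβ hαβ pinv T hpinv i hiN J hJcard hJ S pc pr
    hfeas hopt
end

section
/- The minimal-cost value function is (α−β)-Lipschitz in the initial renewable-energy storage: for initial storage S ≥ 0 and increment Δ ≥ 0, V(S) − V(S+Δ) ≤ (α−β)Δ, where V(E) denotes the minimal total cost achievable when the cumulative harvesting constraints are ∑_{i=1}^k p_i^r ≤ E + ∑_{i=1}^k T_i. -/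
/-!
From a policy feasible with storage `E + Δ`, move the first `Δ` units of renewable power (in
time order) to the conventional source: the cumulative renewable usage `P m` becomes
`(P m - Δ)⁺`, which satisfies the harvesting constraints with storage `E` as soon as
`E + ∑_{i<m} T_i ≥ 0`, and the cost grows by `(α - β) min(P N, Δ) ≤ (α - β) Δ`. That condition
holds whenever some policy is feasible with storage `E`; otherwise `V(E) = sInf ∅ = 0` and the
bound is trivial because costs are nonnegative.
-/

/-- A policy with initial renewable storage `E` selects at most `M` dropped slots (zero
power there), serves the remaining slots with channel inversion power, and satisfies the
cumulative harvesting constraints with initial storage `E`. -/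
def StorageFeasible (N M : ℕ) (pinv T : ℕ → ℝ) (E : ℝ) (S : Finset ℕ)
    (pc pr : ℕ → ℝ) : Prop :=
  S ⊆ Finset.range N ∧ S.card ≤ M ∧
  (∀ j, 0 ≤ pc j) ∧ (∀ j, 0 ≤ pr j) ∧
  (∀ m ≤ N, ∑ j ∈ Finset.range m, pr j ≤ E + ∑ j ∈ Finset.range m, T j) ∧
  (∀ j < N, j ∉ S → pc j + pr j = pinv j) ∧
  (∀ j ∈ S, pc j = 0 ∧ pr j = 0)

/-- The set of achievable total costs with initial storage `E`. -/
def CostSet (N M : ℕ) (pinv T : ℕ → ℝ) (α β : ℝ) (E : ℝ) : Set ℝ :=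
  {v | ∃ S pc pr, StorageFeasible N M pinv T E S pc pr ∧
    v = ∑ i ∈ Finset.range N, (α * pc i + β * pr i)}

open Finset

lemma csInf_le_csInf_add_of_forall_exists_le {A B : Set ℝ} {c : ℝ} (hA : BddBelow A)
    (hB : B.Nonempty) (h : ∀ b ∈ B, ∃ a ∈ A, a ≤ b + c) : sInf A ≤ sInf B + c := by
  rw [← sub_le_iff_le_add]
  refine le_csInf hB fun b hb => ?_
  obtain ⟨a, ha, hab⟩ := h b hb
  linarith [csInf_le hA ha]

noncomputable def excessIncrement (f : ℕ → ℝ) (c : ℝ) (j : ℕ) : ℝ :=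
  max (∑ i ∈ range (j + 1), f i - c) 0 - max (∑ i ∈ range j, f i - c) 0

section excessIncrement

variable {f : ℕ → ℝ} {c : ℝ} {j : ℕ}

lemma excessIncrement_nonneg (hf : 0 ≤ f j) : 0 ≤ excessIncrement f c j := by
  rw [excessIncrement, sum_range_succ, sub_nonneg]
  exact max_le_max_right 0 (by linarith)

lemma excessIncrement_le (hf : 0 ≤ f j) : excessIncrement f c j ≤ f j := by
  rw [excessIncrement, sum_range_succ, sub_le_iff_le_add, max_le_iff]
  have := le_max_left (∑ i ∈ range j, f i - c) 0
  have := le_max_right (∑ i ∈ range j, f i - c) 0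
  constructor <;> linarith

lemma sum_range_excessIncrement (hc : 0 ≤ c) (m : ℕ) :
    ∑ j ∈ range m, excessIncrement f c j = max (∑ i ∈ range m, f i - c) 0 := by
  simp [excessIncrement, sum_range_sub (fun j => max (∑ i ∈ range j, f i - c) 0), hc]

end excessIncrement

namespace StorageFeasible

variable {N M : ℕ} {pinv T : ℕ → ℝ} {E : ℝ} {S : Finset ℕ} {pc pr : ℕ → ℝ}

lemma mono_storage (h : StorageFeasible N M pinv T E S pc pr) {E' : ℝ} (hE : E ≤ E') :
    StorageFeasible N M pinv T E' S pc pr := by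
  obtain ⟨hS, hcard, hpc, hpr, hcum, hserve, hdrop⟩ := h
  exact ⟨hS, hcard, hpc, hpr, fun m hm => (hcum m hm).trans (by linarith), hserve, hdrop⟩

lemma storage_add_sum_nonneg (h : StorageFeasible N M pinv T E S pc pr) {m : ℕ} (hm : m ≤ N) :
    0 ≤ E + ∑ j ∈ range m, T j :=
  (sum_nonneg fun j _ => h.2.2.2.1 j).trans (h.2.2.2.2.1 m hm)

lemma shift_renewable {Δ : ℝ} (h : StorageFeasible N M pinv T (E + Δ) S pc pr) (hΔ : 0 ≤ Δ)
    (hE : ∀ m ≤ N, 0 ≤ E + ∑ j ∈ range m, T j) :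
    StorageFeasible N M pinv T E S (pc + pr - excessIncrement pr Δ) (excessIncrement pr Δ) := by
  obtain ⟨hS, hcard, hpc, hpr, hcum, hserve, hdrop⟩ := h
  have hle j := excessIncrement_le (c := Δ) (hpr j)
  have hnonneg j := excessIncrement_nonneg (c := Δ) (hpr j)
  refine ⟨hS, hcard, fun j => ?_, hnonneg, fun m hm => ?_, fun j hj hjS => ?_, fun j hj => ?_⟩
  · simp only [Pi.add_apply, Pi.sub_apply]
    linarith [hpc j, hle j]
  · rw [sum_range_excessIncrement hΔ, max_le_iff]
    exact ⟨by linarith [hcum m hm], hE m hm⟩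
  · simp only [Pi.add_apply, Pi.sub_apply]
    linarith [hserve j hj hjS]
  · obtain ⟨hpc0, hpr0⟩ := hdrop j hj
    have : excessIncrement pr Δ j = 0 := le_antisymm (hpr0 ▸ hle j) (hnonneg j)
    simp [hpc0, hpr0, this]

end StorageFeasible

section CostSet

variable {N M : ℕ} {pinv T : ℕ → ℝ} {α β E : ℝ}

lemma costSet_mono {E' : ℝ} (hE : E ≤ E') :
    CostSet N M pinv T α β E ⊆ CostSet N M pinv T α β E' := by
  rintro v ⟨S, pc, pr, h, rfl⟩
  exact ⟨S, pc, pr, h.mono_storage hE, rfl⟩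

lemma nonneg_of_mem_costSet (hα : 0 ≤ α) (hβ : 0 ≤ β) {v : ℝ}
    (hv : v ∈ CostSet N M pinv T α β E) : 0 ≤ v := by
  obtain ⟨S, pc, pr, h, rfl⟩ := hv
  exact sum_nonneg fun i _ => add_nonneg (mul_nonneg hα (h.2.2.1 i)) (mul_nonneg hβ (h.2.2.2.1 i))

lemma exists_mem_costSet_le_add {Δ : ℝ} (hαβ : β ≤ α) (hΔ : 0 ≤ Δ)
    (hE : ∀ m ≤ N, 0 ≤ E + ∑ j ∈ range m, T j) {v : ℝ}
    (hv : v ∈ CostSet N M pinv T α β (E + Δ)) :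
    ∃ w ∈ CostSet N M pinv T α β E, w ≤ v + (α - β) * Δ := by
  obtain ⟨S, pc, pr, h, rfl⟩ := hv
  set e := excessIncrement pr Δ
  refine ⟨_, ⟨S, pc + pr - e, e, h.shift_renewable hΔ hE, rfl⟩, ?_⟩
  have hshifted : ∑ i ∈ range N, (pr i - e i) ≤ Δ := by
    rw [sum_sub_distrib, sum_range_excessIncrement hΔ]
    linarith [le_max_left (∑ i ∈ range N, pr i - Δ) 0]
  calc ∑ i ∈ range N, (α * (pc + pr - e) i + β * e i)
      = ∑ i ∈ range N, (α * pc i + β * pr i) + (α - β) * ∑ i ∈ range N, (pr i - e i) := by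
        rw [mul_sum, ← sum_add_distrib]
        exact sum_congr rfl fun i _ => by simp only [Pi.add_apply, Pi.sub_apply]; ring
    _ ≤ ∑ i ∈ range N, (α * pc i + β * pr i) + (α - β) * Δ := by
        gcongr

end CostSet

theorem value_function_lipschitz_in_storage_general (N M : ℕ)
    (α β : ℝ) (hβ : 0 ≤ β) (hαβ : β < α)
    (pinv T : ℕ → ℝ)
    (S Δ : ℝ) (hΔ : 0 ≤ Δ) :
    sInf (CostSet N M pinv T α β S) - sInf (CostSet N M pinv T α β (S + Δ)) ≤
      (α - β) * Δ := by
  have hα : 0 ≤ α := hβ.trans hαβ.le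
  have hcost_nonneg (E : ℝ) : ∀ v ∈ CostSet N M pinv T α β E, 0 ≤ v :=
    fun _ => nonneg_of_mem_costSet hα hβ
  rcases (CostSet N M pinv T α β S).eq_empty_or_nonempty with hempty | hnonempty
  · rw [hempty, Real.sInf_empty]
    linarith [Real.sInf_nonneg (hcost_nonneg (S + Δ)), mul_nonneg (sub_nonneg.2 hαβ.le) hΔ]
  · have hnonempty_shift := hnonempty.mono (costSet_mono (le_add_of_nonneg_right hΔ))
    obtain ⟨_, _, _, _, hfeas, _⟩ := hnonempty
    rw [sub_le_iff_le_add']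
    exact csInf_le_csInf_add_of_forall_exists_le ⟨0, hcost_nonneg S⟩ hnonempty_shift
      fun _ => exists_mem_costSet_le_add hαβ.le hΔ fun _ => hfeas.storage_add_sum_nonneg

/-- The value function is `(α − β)`-Lipschitz in the initial storage:
`V(S) − V(S+Δ) ≤ (α − β)Δ`. -/
theorem value_function_lipschitz_in_storage (N M : ℕ) (hN : 0 < N)
    (α β : ℝ) (hβ : 0 ≤ β) (hαβ : β < α)
    (pinv T : ℕ → ℝ) (hpinv : ∀ j, 0 ≤ pinv j) (hT : ∀ j, 0 ≤ T j)
    (S Δ : ℝ) (hS : 0 ≤ S) (hΔ : 0 ≤ Δ) :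
    sInf (CostSet N M pinv T α β S) - sInf (CostSet N M pinv T α β (S + Δ)) ≤
      (α - β) * Δ :=
  value_function_lipschitz_in_storage_general N M α β hβ hαβ pinv T S Δ hΔ
end

section
/- In the multi-cycle problem with M cycles of N slots each, where at most K outage slots are allowed per cycle, any optimal solution uses exactly K outage slots in every cycle, provided K ≥ 1, all channel inversion powers are strictly positive, and α > β > 0. -/
open scoped Classical

/-!
If a cycle of an optimal policy had fewer than `K` outage slots, then, as `K ≤ N`, it would
contain a served slot `i`, where `pc i + pr i ≥ pinv i > 0`. Switching slot `i` off turns it into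
one more outage, which that cycle can afford, leaves every other cycle and the energy-causality
constraints intact, and strictly lowers the cost since `α, β > 0`: a contradiction.
-/

open Finset Function

section SwitchOff

variable {ι : Type*} [DecidableEq ι]

theorem update_zero_le {f : ι → ℝ} (hf : ∀ x, 0 ≤ f x) (i x : ι) : update f i 0 x ≤ f x :=
  update_le_self_iff.2 (hf i) x

theorem update_zero_nonneg_s11 {f : ι → ℝ} (hf : ∀ x, 0 ≤ f x) (i x : ι) : 0 ≤ update f i 0 x := by
  rcases eq_or_ne x i with rfl | hx
  · simp
  · simpa [hx] using hf x

theorem filter_update_zero_subset (s : Finset ι) (u v w : ι → ℝ) (i : ι) :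
    s.filter (fun x => update u i 0 x + update v i 0 x < w x) ⊆
      insert i (s.filter fun x => u x + v x < w x) := by
  intro x hx
  rcases eq_or_ne x i with rfl | hxi
  · exact mem_insert_self x _
  · simp_all

theorem filter_update_zero_of_notMem {s : Finset ι} {i : ι} (hi : i ∉ s) (u v w : ι → ℝ) :
    s.filter (fun x => update u i 0 x + update v i 0 x < w x) =
      s.filter fun x => u x + v x < w x :=
  filter_congr fun x hx => by rw [update_of_ne (ne_of_mem_of_not_mem hx hi),
    update_of_ne (ne_of_mem_of_not_mem hx hi)]

theorem sum_update_zero_lt {s : Finset ι} {a b : ℝ} (ha : 0 < a) (hb : 0 < b) {u v : ι → ℝ}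
    (hu : ∀ x, 0 ≤ u x) (hv : ∀ x, 0 ≤ v x) {i : ι} (hi : i ∈ s) (hpos : 0 < u i + v i) :
    ∑ x ∈ s, (a * update u i 0 x + b * update v i 0 x) < ∑ x ∈ s, (a * u x + b * v x) := by
  refine sum_lt_sum (fun x _ => ?_) ⟨i, hi, ?_⟩
  · gcongr
    exacts [update_zero_le hu i x, update_zero_le hv i x]
  · simp only [update_self, mul_zero, add_zero]
    rcases (hu i).lt_or_eq with hui | hui
    · exact add_pos_of_pos_of_nonneg (mul_pos ha hui) (mul_nonneg hb.le (hv i))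
    · exact add_pos_of_nonneg_of_pos (mul_nonneg ha.le (hu i)) (mul_pos hb (by linarith))

end SwitchOff

theorem eq_of_mem_Ico_mul {N j j' i : ℕ} (h : i ∈ Ico (j * N) (j * N + N))
    (h' : i ∈ Ico (j' * N) (j' * N + N)) : j = j' := by
  rw [mem_Ico] at h h'
  rw [← Nat.div_eq_of_lt_le h.1 (by linarith [Nat.succ_mul j N]),
    Nat.div_eq_of_lt_le h'.1 (by linarith [Nat.succ_mul j' N])]

theorem lt_mul_of_mem_Ico_mul {M N j i : ℕ} (hj : j < M) (h : i ∈ Ico (j * N) (j * N + N)) :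
    i < M * N := by
  rw [mem_Ico] at h
  nlinarith

theorem multicycle_optimal_uses_full_outage_budget_general (M N K : ℕ)
    (hKN : K ≤ N)
    (α β : ℝ) (hβ : 0 < β) (hαβ : β < α)
    (pinv T : ℕ → ℝ) (hpinv : ∀ i < M * N, 0 < pinv i)
    (pc pr : ℕ → ℝ)
    (hpc : ∀ i, 0 ≤ pc i) (hpr : ∀ i, 0 ≤ pr i)
    (hcum : ∀ k ≤ M * N, ∑ i ∈ Finset.range k, pr i ≤ ∑ i ∈ Finset.range k, T i)
    (hout : ∀ j < M,
      ((Finset.Ico (j * N) (j * N + N)).filter (fun i => pc i + pr i < pinv i)).card ≤ K)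
    (hopt : ∀ qc qr : ℕ → ℝ, (∀ i, 0 ≤ qc i) → (∀ i, 0 ≤ qr i) →
      (∀ k ≤ M * N, ∑ i ∈ Finset.range k, qr i ≤ ∑ i ∈ Finset.range k, T i) →
      (∀ j < M, ((Finset.Ico (j * N) (j * N + N)).filter
          (fun i => qc i + qr i < pinv i)).card ≤ K) →
      ∑ i ∈ Finset.range (M * N), (α * pc i + β * pr i) ≤
        ∑ i ∈ Finset.range (M * N), (α * qc i + β * qr i)) :
    ∀ j < M,
      ((Finset.Ico (j * N) (j * N + N)).filter
        (fun i => pc i + pr i < pinv i)).card = K := by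
  intro j hj
  refine (hout j hj).antisymm (not_lt.1 fun hslack => ?_)
  obtain ⟨i, hi, hserved⟩ := exists_mem_notMem_of_card_lt_card
    (hslack.trans_le (by simpa using hKN : K ≤ #(Ico (j * N) (j * N + N))))
  have hiMN : i < M * N := lt_mul_of_mem_Ico_mul hj hi
  have hpos : 0 < pc i + pr i :=
    (hpinv i hiMN).trans_le (not_lt.1 fun h => hserved (mem_filter.2 ⟨hi, h⟩))
  have hfeas := hopt (update pc i 0) (update pr i 0) (update_zero_nonneg_s11 hpc i)
    (update_zero_nonneg_s11 hpr i)
    (fun k hk => (sum_le_sum fun x _ => update_zero_le hpr i x).trans (hcum k hk))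
    (fun j' hj' => by
      by_cases hjj' : j' = j
      · subst hjj'
        exact (card_le_card (filter_update_zero_subset _ _ _ _ i)).trans
          ((card_insert_le _ _).trans hslack)
      · rw [filter_update_zero_of_notMem (fun h => hjj' (eq_of_mem_Ico_mul h hi))]
        exact hout j' hj')
  exact (sum_update_zero_lt (hβ.trans hαβ) hβ hpc hpr (mem_range.2 hiMN) hpos).not_ge hfeas

/-- In the multi-cycle problem with `M` cycles of `N` slots and at most `K` outage slots
allowed per cycle, any optimal solution uses exactly `K` outage slots in every cycle. -/
theorem multicycle_optimal_uses_full_outage_budget (M N K : ℕ) (hM : 0 < M) (hN : 0 < N)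
    (hK1 : 1 ≤ K) (hKN : K ≤ N)
    (α β : ℝ) (hβ : 0 < β) (hαβ : β < α)
    (pinv T : ℕ → ℝ) (hpinv : ∀ i < M * N, 0 < pinv i) (hT : ∀ i, 0 ≤ T i)
    (pc pr : ℕ → ℝ)
    (hpc : ∀ i, 0 ≤ pc i) (hpr : ∀ i, 0 ≤ pr i)
    (hcum : ∀ k ≤ M * N, ∑ i ∈ Finset.range k, pr i ≤ ∑ i ∈ Finset.range k, T i)
    (hout : ∀ j < M,
      ((Finset.Ico (j * N) (j * N + N)).filter (fun i => pc i + pr i < pinv i)).card ≤ K)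
    (hopt : ∀ qc qr : ℕ → ℝ, (∀ i, 0 ≤ qc i) → (∀ i, 0 ≤ qr i) →
      (∀ k ≤ M * N, ∑ i ∈ Finset.range k, qr i ≤ ∑ i ∈ Finset.range k, T i) →
      (∀ j < M, ((Finset.Ico (j * N) (j * N + N)).filter
          (fun i => qc i + qr i < pinv i)).card ≤ K) →
      ∑ i ∈ Finset.range (M * N), (α * pc i + β * pr i) ≤
        ∑ i ∈ Finset.range (M * N), (α * qc i + β * qr i)) :
    ∀ j < M,
      ((Finset.Ico (j * N) (j * N + N)).filter
        (fun i => pc i + pr i < pinv i)).card = K :=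
  multicycle_optimal_uses_full_outage_budget_general M N K hKN α β hβ hαβ pinv T hpinv pc pr hpc hpr
    hcum hout hopt
end

section
/- Under the greedy power allocation for a fixed served set, either every served slot uses only renewable energy (p_i^c = 0 for all served i), or all harvested energy available up to the last slot where conventional energy is used has been exhausted; formally, if p_k^c > 0 for some served slot k under greedy allocation, then ∑_{i=1}^k p_i^r = ∑_{i=1}^k T_i. -/
theorem greedy_sum_eq_harvest_of_lt_demand (q T pr : ℕ → ℝ)
    (hpr : ∀ i, pr i = min (q i)
      ((∑ j ∈ Finset.range (i+1), T j) - ∑ j ∈ Finset.range i, pr j))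
    {k : ℕ} (hlt : pr k < q k) :
    ∑ i ∈ Finset.range (k+1), pr i = ∑ i ∈ Finset.range (k+1), T i := by
  have hresidual : pr k = (∑ j ∈ Finset.range (k+1), T j) - ∑ j ∈ Finset.range k, pr j := by
    rw [hpr k] at hlt ⊢
    exact min_eq_right (min_lt_iff.mp hlt |>.resolve_left (lt_irrefl _)).le
  rw [Finset.sum_range_succ, hresidual]
  ring

theorem greedy_conventional_implies_harvest_exhausted_general
    (q T : ℕ → ℝ)
    (pr : ℕ → ℝ)
    (hpr : ∀ i, pr i = min (q i)
      ((∑ j ∈ Finset.range (i+1), T j) - ∑ j ∈ Finset.range i, pr j))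
    (pc : ℕ → ℝ) (hpc : ∀ i, pc i = q i - pr i)
    (k : ℕ) (hconv : 0 < pc k) :
    ∑ i ∈ Finset.range (k+1), pr i = ∑ i ∈ Finset.range (k+1), T i := by
  have hlt : pr k < q k := by linarith [hpc k]
  exact greedy_sum_eq_harvest_of_lt_demand q T pr hpr hlt

/-- Under the greedy allocation, if some slot uses conventional energy, then all the
harvested energy available up to that slot has been exhausted. -/
theorem greedy_conventional_implies_harvest_exhausted (N : ℕ)
    (q T : ℕ → ℝ) (hq : ∀ i, 0 ≤ q i) (hT : ∀ i, 0 ≤ T i)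
    (pr : ℕ → ℝ)
    (hpr : ∀ i, pr i = min (q i)
      ((∑ j ∈ Finset.range (i+1), T j) - ∑ j ∈ Finset.range i, pr j))
    (pc : ℕ → ℝ) (hpc : ∀ i, pc i = q i - pr i)
    (k : ℕ) (hk : k < N) (hconv : 0 < pc k) :
    ∑ i ∈ Finset.range (k+1), pr i = ∑ i ∈ Finset.range (k+1), T i :=
  greedy_conventional_implies_harvest_exhausted_general q T pr hpr pc hpc k hconv
end

section
/- For the cumulative-constraint linear program with objective α∑c_i − (α−β)∑x_i, the KKT multipliers constructed as follows certify optimality of the greedy policy: with K the largest index at which the cumulative constraint is tight under the greedy policy (K = 0 if none), set μ_K = α−β and μ_i = 0 for i ≠ K, λ_i = α−β for i > K and λ_i = 0 for i ≤ K, γ_i = 0 for all i; then stationarity −(α−β) + λ_i + ∑_{j=i}^N μ_j − γ_i = 0, complementary slackness λ_i(x_i* − c_i) = 0 and μ_i(∑_{j≤i} x_j* − ∑_{j≤i} T_j) = 0, and dual feasibility λ_i, μ_i, γ_i ≥ 0 all hold. -/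
open scoped Classical

/-! Past the last tight index `K`, the greedy policy never exhausts the cumulative budget, so
the minimum in its definition is always attained by the capacity: `x_i* = c_i`. Hence the capacity
multiplier `λ_i = α - β` is complementary there, while before `K` the single cumulative multiplier
`μ_K = α - β` (tight by the choice of `K`) supplies the same amount to stationarity. -/

theorem eq_left_of_eq_min_sub_of_add_ne {G : Type*} [AddCommGroup G] [LinearOrder G]
    {x a b s : G} (hx : x = min a (b - s)) (hne : s + x ≠ b) : x = a := by
  rcases min_choice a (b - s) with h | h
  · rwa [h] at hx
  · exact absurd (by rw [hx, h, add_sub_cancel]) hne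

theorem greedy_eq_cap_of_not_tight {G : Type*} [AddCommGroup G] [LinearOrder G]
    {c T xs : ℕ → G} {i : ℕ}
    (hxs : xs i = min (c i) ((∑ j ∈ Finset.range (i+1), T j) - ∑ j ∈ Finset.range i, xs j))
    (hne : ∑ j ∈ Finset.range (i+1), xs j ≠ ∑ j ∈ Finset.range (i+1), T j) :
    xs i = c i :=
  eq_left_of_eq_min_sub_of_add_ne hxs (by rwa [← Finset.sum_range_succ])

theorem sum_Ico_ite_succ_eq {M : Type*} [AddCommMonoid M] {K N : ℕ} (hKN : K ≤ N) (i : ℕ)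
    (a : M) :
    ∑ j ∈ Finset.Ico i N, (if j + 1 = K then a else 0) = if i < K then a else 0 := by
  rcases K with _ | k
  · simp
  · simp only [Nat.add_right_cancel_iff, Finset.sum_ite_eq', Finset.mem_Ico]
    exact if_congr (by omega) rfl rfl

theorem greedy_KKT_multipliers_general (N : ℕ) (α β : ℝ) (hαβ : β ≤ α)
    (c T : ℕ → ℝ)
    (xs : ℕ → ℝ)
    (hxs : ∀ i, xs i = min (c i)
      ((∑ j ∈ Finset.range (i+1), T j) - ∑ j ∈ Finset.range i, xs j))
    (K : ℕ) (hKN : K ≤ N)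
    (hKtight : ∑ j ∈ Finset.range K, xs j = ∑ j ∈ Finset.range K, T j)
    (hKmax : ∀ m ≤ N, K < m →
      ∑ j ∈ Finset.range m, xs j ≠ ∑ j ∈ Finset.range m, T j)
    (lam mu gam : ℕ → ℝ)
    (hlam : ∀ i, lam i = if K ≤ i then α - β else 0)
    (hmu : ∀ i, mu i = if i + 1 = K then α - β else 0)
    (hgam : ∀ i, gam i = 0) :
    ∀ i < N,
      (-(α - β) + lam i + (∑ j ∈ Finset.Ico i N, mu j) - gam i = 0) ∧
      (lam i * (xs i - c i) = 0) ∧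
      (mu i * ((∑ j ∈ Finset.range (i+1), xs j) - ∑ j ∈ Finset.range (i+1), T j) = 0) ∧
      (gam i * xs i = 0) ∧
      (0 ≤ lam i ∧ 0 ≤ mu i ∧ 0 ≤ gam i) := by
  intro i hiN
  have hαβ' : 0 ≤ α - β := sub_nonneg.mpr hαβ
  simp only [hlam, hmu, hgam, sum_Ico_ite_succ_eq hKN]
  refine ⟨?_, ?_, ?_, by ring, by split_ifs <;> simp [hαβ'], by split_ifs <;> simp [hαβ'], le_rfl⟩
  · split_ifs <;> first | (exfalso; omega) | ring
  · split_ifs with hKi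
    · rw [greedy_eq_cap_of_not_tight (hxs i) (hKmax (i + 1) hiN (by omega))]; ring
    · ring
  · split_ifs with hiK
    · rw [hiK, hKtight]; ring
    · ring

/-- The explicitly constructed KKT multipliers certify optimality of the greedy policy:
stationarity, complementary slackness, and dual feasibility all hold.  Here slot `i`
(0-indexed) corresponds to slot `i+1` of the paper, and `K ∈ {0,…,N}` is the largest
index such that the cumulative constraint `∑_{j<K} x_j* = ∑_{j<K} T_j` is tight. -/
theorem greedy_KKT_multipliers (N : ℕ) (hN : 0 < N) (α β : ℝ) (hαβ : β ≤ α)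
    (c T : ℕ → ℝ) (hc : ∀ i, 0 ≤ c i) (hT : ∀ i, 0 ≤ T i)
    (xs : ℕ → ℝ)
    (hxs : ∀ i, xs i = min (c i)
      ((∑ j ∈ Finset.range (i+1), T j) - ∑ j ∈ Finset.range i, xs j))
    (K : ℕ) (hKN : K ≤ N)
    (hKtight : ∑ j ∈ Finset.range K, xs j = ∑ j ∈ Finset.range K, T j)
    (hKmax : ∀ m ≤ N, K < m →
      ∑ j ∈ Finset.range m, xs j ≠ ∑ j ∈ Finset.range m, T j)
    (lam mu gam : ℕ → ℝ)
    (hlam : ∀ i, lam i = if K ≤ i then α - β else 0)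
    (hmu : ∀ i, mu i = if i + 1 = K then α - β else 0)
    (hgam : ∀ i, gam i = 0) :
    ∀ i < N,
      (-(α - β) + lam i + (∑ j ∈ Finset.Ico i N, mu j) - gam i = 0) ∧
      (lam i * (xs i - c i) = 0) ∧
      (mu i * ((∑ j ∈ Finset.range (i+1), xs j) - ∑ j ∈ Finset.range (i+1), T j) = 0) ∧
      (gam i * xs i = 0) ∧
      (0 ≤ lam i ∧ 0 ≤ mu i ∧ 0 ≤ gam i) :=
  greedy_KKT_multipliers_general N α β hαβ c T xs hxs K hKN hKtight hKmax lam mu gam hlam hmu hgam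
end
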